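/- Subsumption internalisation: a SHIQ concept D subsumes C with respect to terminology T and role hierarchy R if and only if C ⊓ ¬D ⊓ C_T ⊓ ∀U.C_T is unsatisfiable with respect to R_U. -/

import Mathlib

/-!
A concept only sees the part of an interpretation reachable along the roles it mentions
(`IsRoleClosedEmbedding.mem_conceptI_iff`). If `x` satisfies `c ⊓ ¬d ⊓ C_T ⊓ ∀U.C_T` in a
model of `R_U`, every role in use lies below the transitive role `U`, so `x` together with its
`U`-successors is closed under those roles; `C_T` holds on all of it, so this
sub-interpretation is a model of `T` and `R` in which `x ∈ c \ d`. Conversely, in a model of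
`T` and `R` with an element of `c \ d`, reinterpreting the fresh role `U` as the universal
relation changes no concept in use and makes `R_U` and `∀U.C_T` hold.
-/

namespace SHIQ

/-- Roles: role names and their inverses. -/
inductive SRole (Rn : Type) : Type where
  | name : Rn → SRole Rn
  | inv  : Rn → SRole Rn

/-- The function `Inv` on roles. -/
def SRole.Inv {Rn : Type} : SRole Rn → SRole Rn
  | .name r => .inv r
  | .inv r  => .name r

/-- The underlying role name of a (possibly inverse) role. -/
def SRole.base {Rn : Type} : SRole Rn → Rn
  | .name r => r
  | .inv r  => r

/-- SHIQ concepts over concept names `Cn` and role names `Rn`. -/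
inductive Concept (Cn Rn : Type) : Type where
  | atom : Cn → Concept Cn Rn
  | conj : Concept Cn Rn → Concept Cn Rn → Concept Cn Rn
  | disj : Concept Cn Rn → Concept Cn Rn → Concept Cn Rn
  | neg  : Concept Cn Rn → Concept Cn Rn
  | ex   : SRole Rn → Concept Cn Rn → Concept Cn Rn
  | all  : SRole Rn → Concept Cn Rn → Concept Cn Rn
  | atLeast : ℕ → SRole Rn → Concept Cn Rn → Concept Cn Rn
  | atMost  : ℕ → SRole Rn → Concept Cn Rn → Concept Cn Rn

/-- An interpretation `I = (Δ, ·^I)`. -/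
structure Interp (Cn Rn : Type) where
  Dom : Type
  dom_nonempty : Nonempty Dom
  cI : Cn → Set Dom
  rI : Rn → Set (Dom × Dom)

/-- Interpretation of (possibly inverse) roles. -/
def Interp.roleI {Cn Rn : Type} (I : Interp Cn Rn) : SRole Rn → Set (I.Dom × I.Dom)
  | .name r => I.rI r
  | .inv r  => {p | (p.2, p.1) ∈ I.rI r}

/-- Extension of a concept in an interpretation. -/
def Interp.conceptI {Cn Rn : Type} (I : Interp Cn Rn) : Concept Cn Rn → Set I.Dom
  | .atom a => I.cI a
  | .conj c d => I.conceptI c ∩ I.conceptI d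
  | .disj c d => I.conceptI c ∪ I.conceptI d
  | .neg c => (I.conceptI c)ᶜ
  | .ex S c => {x | ∃ y, (x, y) ∈ I.roleI S ∧ y ∈ I.conceptI c}
  | .all S c => {x | ∀ y, (x, y) ∈ I.roleI S → y ∈ I.conceptI c}
  | .atLeast n S c => {x | (n : ℕ∞) ≤ {y | (x, y) ∈ I.roleI S ∧ y ∈ I.conceptI c}.encard}
  | .atMost n S c => {x | {y | (x, y) ∈ I.roleI S ∧ y ∈ I.conceptI c}.encard ≤ (n : ℕ∞)}

/-- `I` interprets each transitive role name in `Rp` as a transitive relation. -/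
def Interp.respectsTrans {Cn Rn : Type} (I : Interp Cn Rn) (Rp : Set Rn) : Prop :=
  ∀ r ∈ Rp, ∀ x y z : I.Dom, (x, y) ∈ I.rI r → (y, z) ∈ I.rI r → (x, z) ∈ I.rI r

/-- A role hierarchy: a set of role inclusion axioms `R ⊑ S`. -/
abbrev RoleHierarchy (Rn : Type) := Set (SRole Rn × SRole Rn)

/-- `I` satisfies the role hierarchy `H`. -/
def Interp.modelsH {Cn Rn : Type} (I : Interp Cn Rn) (H : RoleHierarchy Rn) : Prop :=
  ∀ p ∈ H, I.roleI p.1 ⊆ I.roleI p.2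

/-- The relation `⊑*`: transitive-reflexive closure of `⊑` over `H` together with
the inverse axioms `Inv(R) ⊑ Inv(S)`. -/
def subRole {Rn : Type} (H : RoleHierarchy Rn) : SRole Rn → SRole Rn → Prop :=
  Relation.ReflTransGen (fun R S => (R, S) ∈ H ∨ (R.Inv, S.Inv) ∈ H)

/-- A terminology: a finite list of GCIs `C ⊑ D`. -/
abbrev Terminology (Cn Rn : Type) := List (Concept Cn Rn × Concept Cn Rn)

/-- `I` satisfies the terminology `T`. -/
def Interp.modelsT {Cn Rn : Type} (I : Interp Cn Rn) (T : Terminology Cn Rn) : Prop :=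
  ∀ p ∈ T, I.conceptI p.1 ⊆ I.conceptI p.2

/-- The set of roles occurring in a concept. -/
def Concept.rolesOf {Cn Rn : Type} : Concept Cn Rn → Set (SRole Rn)
  | .atom _ => ∅
  | .conj c d => c.rolesOf ∪ d.rolesOf
  | .disj c d => c.rolesOf ∪ d.rolesOf
  | .neg c => c.rolesOf
  | .ex S c => insert S c.rolesOf
  | .all S c => insert S c.rolesOf
  | .atLeast _ S c => insert S c.rolesOf
  | .atMost _ S c => insert S c.rolesOf

/-- The set of roles occurring in a terminology. -/
def Terminology.rolesOf {Cn Rn : Type} (T : Terminology Cn Rn) : Set (SRole Rn) :=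
  {S | ∃ p ∈ T, S ∈ p.1.rolesOf ∪ p.2.rolesOf}

/-- The set of roles occurring in a role hierarchy. -/
def RoleHierarchy.rolesOf {Rn : Type} (H : RoleHierarchy Rn) : Set (SRole Rn) :=
  {S | ∃ p ∈ H, S = p.1 ∨ S = p.2}

/-- The concept `¬C ⊔ D` corresponding to a GCI `C ⊑ D`. -/
def gciConcept {Cn Rn : Type} (p : Concept Cn Rn × Concept Cn Rn) : Concept Cn Rn :=
  .disj (.neg p.1) p.2

/-- `C_T`: the conjunction of `¬C_i ⊔ D_i` over all GCIs `C_i ⊑ D_i` of `T`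
(for the empty terminology we take the tautology `A ⊔ ¬A`). -/
def CT {Cn Rn : Type} (a : Cn) : Terminology Cn Rn → Concept Cn Rn
  | [] => .disj (.atom a) (.neg (.atom a))
  | [p] => gciConcept p
  | p :: q :: T => .conj (gciConcept p) (CT a (q :: T))

/-- `R_U`: the role hierarchy `H` extended by `R ⊑ U` and `Inv(R) ⊑ U` for every
role `R` in the given set of roles. -/
def addU {Rn : Type} (H : RoleHierarchy Rn) (roles : Set (SRole Rn)) (u : Rn) :
    RoleHierarchy Rn :=
  H ∪ {p | ∃ S ∈ roles, p = (S, SRole.name u) ∨ p = (S.Inv, SRole.name u)}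

section Internalisation

variable {Cn Rn : Type}

theorem mem_conceptI_CT (I : Interp Cn Rn) (a : Cn) (x : I.Dom) :
    ∀ T : Terminology Cn Rn,
      x ∈ I.conceptI (CT a T) ↔ ∀ p ∈ T, x ∈ I.conceptI p.1 → x ∈ I.conceptI p.2
  | [] => by simp [CT, Interp.conceptI]
  | [p] => by
    simp only [CT, gciConcept, Interp.conceptI, Set.mem_union, Set.mem_compl_iff,
      ← imp_iff_not_or, List.forall_mem_singleton]
  | p :: q :: T => by
    simp only [CT, gciConcept, Interp.conceptI, Set.mem_inter_iff, Set.mem_union,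
      Set.mem_compl_iff, mem_conceptI_CT I a x (q :: T), ← imp_iff_not_or, List.forall_mem_cons]

theorem modelsT_iff_forall_mem_CT (I : Interp Cn Rn) (a : Cn) (T : Terminology Cn Rn) :
    I.modelsT T ↔ ∀ x, x ∈ I.conceptI (CT a T) := by
  simp only [mem_conceptI_CT]
  exact ⟨fun h x p hp hx => h p hp hx, fun h p hp x hx => h x p hp hx⟩

theorem rolesOf_CT_subset (a : Cn) :
    ∀ T : Terminology Cn Rn, (CT a T).rolesOf ⊆ Terminology.rolesOf T
  | [] => by simp [CT, Concept.rolesOf]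
  | [p] => fun _ hS => ⟨p, List.mem_singleton_self p, hS⟩
  | p :: q :: T => by
    rintro S (hS | hS)
    · exact ⟨p, List.mem_cons_self, hS⟩
    · obtain ⟨r, hr, hSr⟩ := rolesOf_CT_subset a (q :: T) hS
      exact ⟨r, List.mem_cons_of_mem p hr, hSr⟩

structure IsRoleClosedEmbedding (J I : Interp Cn Rn) (roles : Set (SRole Rn))
    (φ : J.Dom → I.Dom) : Prop where
  injective : Function.Injective φ
  mem_cI_iff : ∀ A y, y ∈ J.cI A ↔ φ y ∈ I.cI A
  mem_roleI_iff : ∀ S ∈ roles, ∀ y w, (y, w) ∈ J.roleI S ↔ (φ y, φ w) ∈ I.roleI S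
  mem_range_of_mem_roleI : ∀ S ∈ roles, ∀ y z, (φ y, z) ∈ I.roleI S → z ∈ Set.range φ

namespace IsRoleClosedEmbedding

variable {J I : Interp Cn Rn} {roles : Set (SRole Rn)} {φ : J.Dom → I.Dom}

theorem image_successors (e : IsRoleClosedEmbedding J I roles φ) {S : SRole Rn}
    (hS : S ∈ roles) {P : J.Dom → Prop} {Q : I.Dom → Prop} (hPQ : ∀ w, P w ↔ Q (φ w))
    (y : J.Dom) :
    φ '' {w | (y, w) ∈ J.roleI S ∧ P w} = {z | (φ y, z) ∈ I.roleI S ∧ Q z} := by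
  ext z
  constructor
  · rintro ⟨w, ⟨hyw, hw⟩, rfl⟩
    exact ⟨(e.mem_roleI_iff S hS y w).1 hyw, (hPQ w).1 hw⟩
  · rintro ⟨hyz, hz⟩
    obtain ⟨w, rfl⟩ := e.mem_range_of_mem_roleI S hS y z hyz
    exact ⟨w, ⟨(e.mem_roleI_iff S hS y w).2 hyz, (hPQ w).2 hz⟩, rfl⟩

theorem encard_successors (e : IsRoleClosedEmbedding J I roles φ) {S : SRole Rn}
    (hS : S ∈ roles) {P : J.Dom → Prop} {Q : I.Dom → Prop} (hPQ : ∀ w, P w ↔ Q (φ w))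
    (y : J.Dom) :
    {w | (y, w) ∈ J.roleI S ∧ P w}.encard = {z | (φ y, z) ∈ I.roleI S ∧ Q z}.encard := by
  rw [← e.image_successors hS hPQ y, e.injective.injOn.encard_image]

theorem mem_conceptI_iff (e : IsRoleClosedEmbedding J I roles φ) {C : Concept Cn Rn}
    (hC : C.rolesOf ⊆ roles) (y : J.Dom) : y ∈ J.conceptI C ↔ φ y ∈ I.conceptI C := by
  induction C generalizing y with
  | atom A => exact e.mem_cI_iff A y
  | conj C D ihC ihD =>
    rw [Concept.rolesOf, Set.union_subset_iff] at hC
    exact and_congr (ihC hC.1 y) (ihD hC.2 y)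
  | disj C D ihC ihD =>
    rw [Concept.rolesOf, Set.union_subset_iff] at hC
    exact or_congr (ihC hC.1 y) (ihD hC.2 y)
  | neg C ihC => exact not_congr (ihC hC y)
  | ex S C ihC =>
    rw [Concept.rolesOf, Set.insert_subset_iff] at hC
    change {w | _ ∧ _}.Nonempty ↔ {z | _ ∧ _}.Nonempty
    rw [← e.image_successors hC.1 (ihC hC.2) y, Set.image_nonempty]
  | all S C ihC =>
    rw [Concept.rolesOf, Set.insert_subset_iff] at hC
    constructor
    · intro hy z hyz
      obtain ⟨w, rfl⟩ := e.mem_range_of_mem_roleI S hC.1 y z hyz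
      exact (ihC hC.2 w).1 (hy w ((e.mem_roleI_iff S hC.1 y w).2 hyz))
    · intro hy w hyw
      exact (ihC hC.2 w).2 (hy (φ w) ((e.mem_roleI_iff S hC.1 y w).1 hyw))
  | atLeast n S C ihC =>
    rw [Concept.rolesOf, Set.insert_subset_iff] at hC
    simp only [Interp.conceptI, Set.mem_ofPred_eq, e.encard_successors hC.1 (ihC hC.2) y]
  | atMost n S C ihC =>
    rw [Concept.rolesOf, Set.insert_subset_iff] at hC
    simp only [Interp.conceptI, Set.mem_ofPred_eq, e.encard_successors hC.1 (ihC hC.2) y]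

end IsRoleClosedEmbedding

def Interp.restrict (I : Interp Cn Rn) (D : Set I.Dom) (hD : D.Nonempty) : Interp Cn Rn where
  Dom := D
  dom_nonempty := hD.to_subtype
  cI A := {y | (y : I.Dom) ∈ I.cI A}
  rI r := {p | ((p.1 : I.Dom), (p.2 : I.Dom)) ∈ I.rI r}

section Restrict

variable (I : Interp Cn Rn) {D : Set I.Dom} (hD : D.Nonempty)

theorem mem_roleI_restrict (S : SRole Rn) (y w : D) :
    (y, w) ∈ (I.restrict D hD).roleI S ↔ ((y : I.Dom), (w : I.Dom)) ∈ I.roleI S := by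
  cases S <;> rfl

theorem isRoleClosedEmbedding_restrict {roles : Set (SRole Rn)}
    (hD_closed : ∀ S ∈ roles, ∀ y ∈ D, ∀ z, (y, z) ∈ I.roleI S → z ∈ D) :
    IsRoleClosedEmbedding (I.restrict D hD) I roles Subtype.val where
  injective := Subtype.val_injective
  mem_cI_iff _ _ := Iff.rfl
  mem_roleI_iff S _ := mem_roleI_restrict I hD S
  mem_range_of_mem_roleI S hS y z hyz := ⟨⟨z, hD_closed S hS y.1 y.2 z hyz⟩, rfl⟩

variable {I}

theorem Interp.respectsTrans.restrict {Rp : Set Rn} (h : I.respectsTrans Rp) :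
    (I.restrict D hD).respectsTrans Rp :=
  fun r hr x y z => h r hr x.1 y.1 z.1

theorem Interp.modelsH.restrict {H : RoleHierarchy Rn} (h : I.modelsH H) :
    (I.restrict D hD).modelsH H := fun p hp q hq =>
  (mem_roleI_restrict I hD p.2 q.1 q.2).2 (h p hp ((mem_roleI_restrict I hD p.1 q.1 q.2).1 hq))

end Restrict

def Interp.updateRole [DecidableEq Rn] (I : Interp Cn Rn) (u : Rn) (R : Set (I.Dom × I.Dom)) :
    Interp Cn Rn :=
  { I with rI := Function.update I.rI u R }

section UpdateRole

variable [DecidableEq Rn] (I : Interp Cn Rn) (u : Rn) (R : Set (I.Dom × I.Dom))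

theorem rI_updateRole_self : (I.updateRole u R).rI u = R :=
  show Function.update I.rI u R u = R from Function.update_self u R I.rI

theorem rI_updateRole_of_ne {r : Rn} (hr : r ≠ u) : (I.updateRole u R).rI r = I.rI r :=
  show Function.update I.rI u R r = I.rI r from Function.update_of_ne hr R I.rI

theorem roleI_updateRole_of_base_ne {S : SRole Rn} (hS : S.base ≠ u) :
    (I.updateRole u R).roleI S = I.roleI S := by
  cases S with
  | name r => exact rI_updateRole_of_ne I u R hS
  | inv r =>
    ext p
    exact Set.ext_iff.1 (rI_updateRole_of_ne I u R hS) (p.2, p.1)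

theorem respectsTrans_updateRole {Rp : Set Rn} (h : I.respectsTrans Rp)
    (hR : ∀ x y z, (x, y) ∈ R → (y, z) ∈ R → (x, z) ∈ R) :
    (I.updateRole u R).respectsTrans (insert u Rp) := by
  intro r hr
  by_cases hru : r = u
  · subst hru
    rw [rI_updateRole_self]
    exact hR
  · rw [rI_updateRole_of_ne I u R hru]
    exact h r (Set.mem_of_mem_insert_of_ne hr hru)

theorem isRoleClosedEmbedding_updateRole {roles : Set (SRole Rn)}
    (hfresh : ∀ S ∈ roles, S.base ≠ u) :
    IsRoleClosedEmbedding (I.updateRole u R) I roles id where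
  injective := Function.injective_id
  mem_cI_iff _ _ := Iff.rfl
  mem_roleI_iff S hS y w := by rw [roleI_updateRole_of_base_ne I u R (hfresh S hS)]; rfl
  mem_range_of_mem_roleI _ _ _ z _ := ⟨z, rfl⟩

end UpdateRole

def Subsumes (Rp : Set Rn) (T : Terminology Cn Rn) (H : RoleHierarchy Rn)
    (c d : Concept Cn Rn) : Prop :=
  ∀ I : Interp Cn Rn, I.respectsTrans Rp → I.modelsT T → I.modelsH H →
    I.conceptI c ⊆ I.conceptI d

def Satisfiable (Rp : Set Rn) (H : RoleHierarchy Rn) (C : Concept Cn Rn) : Prop :=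
  ∃ I : Interp Cn Rn, I.respectsTrans Rp ∧ I.modelsH H ∧ (I.conceptI C).Nonempty

def internalisation (a : Cn) (T : Terminology Cn Rn) (u : Rn) (c d : Concept Cn Rn) :
    Concept Cn Rn :=
  .conj c (.conj (.neg d) (.conj (CT a T) (.all (SRole.name u) (CT a T))))

variable {a : Cn} {Rp : Set Rn} {T : Terminology Cn Rn} {H : RoleHierarchy Rn}
  {c d : Concept Cn Rn} {u : Rn} {roles : Set (SRole Rn)}

theorem roleI_subset_of_modelsH_addU {I : Interp Cn Rn} (h : I.modelsH (addU H roles u))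
    {S : SRole Rn} (hS : S ∈ roles) : I.roleI S ⊆ I.rI u :=
  h (S, SRole.name u) (Or.inr ⟨S, hS, Or.inl rfl⟩)

theorem Subsumes.not_satisfiable_internalisation (hc : c.rolesOf ⊆ roles)
    (hd : d.rolesOf ⊆ roles) (hT : Terminology.rolesOf T ⊆ roles)
    (hsub : Subsumes Rp T H c d) :
    ¬ Satisfiable (insert u Rp) (addU H roles u) (internalisation a T u c d) := by
  rintro ⟨I, htrans, hH, x, hxc, hxd, hxCT, hxU⟩
  set D : Set I.Dom := insert x {y | (x, y) ∈ I.rI u}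
  have hD_closed : ∀ S ∈ roles, ∀ y ∈ D, ∀ z, (y, z) ∈ I.roleI S → z ∈ D := by
    rintro S hS y (rfl | hxy) z hyz
    · exact Or.inr (roleI_subset_of_modelsH_addU hH hS hyz)
    · exact Or.inr (htrans u (Set.mem_insert u Rp) x y z hxy
        (roleI_subset_of_modelsH_addU hH hS hyz))
  have hxD : x ∈ D := Set.mem_insert x _
  have hD : D.Nonempty := ⟨x, hxD⟩
  have e := isRoleClosedEmbedding_restrict I hD hD_closed
  have hJT : (I.restrict D hD).modelsT T := by
    rw [modelsT_iff_forall_mem_CT _ a]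
    intro y
    rw [e.mem_conceptI_iff ((rolesOf_CT_subset a T).trans hT)]
    rcases y.2 with hyx | hxy
    · rw [hyx]
      exact hxCT
    · exact hxU y.1 hxy
  have hJtrans : (I.restrict D hD).respectsTrans Rp :=
    Interp.respectsTrans.restrict hD fun r hr => htrans r (Set.mem_insert_of_mem u hr)
  have hJH : (I.restrict D hD).modelsH H :=
    Interp.modelsH.restrict hD fun p hp => hH p (Or.inl hp)
  have hxd' := hsub _ hJtrans hJT hJH ((e.mem_conceptI_iff hc ⟨x, hxD⟩).2 hxc)
  exact hxd ((e.mem_conceptI_iff hd _).1 hxd')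

theorem satisfiable_internalisation_of_not_subsumes (hc : c.rolesOf ⊆ roles)
    (hd : d.rolesOf ⊆ roles) (hT : Terminology.rolesOf T ⊆ roles)
    (hH : RoleHierarchy.rolesOf H ⊆ roles) (hfresh : ∀ S ∈ roles, S.base ≠ u)
    (hnsub : ¬ Subsumes Rp T H c d) :
    Satisfiable (insert u Rp) (addU H roles u) (internalisation a T u c d) := by
  classical
  obtain ⟨I, htrans, hIT, hIH, hnot⟩ : ∃ I : Interp Cn Rn, I.respectsTrans Rp ∧ I.modelsT T ∧
      I.modelsH H ∧ ¬ I.conceptI c ⊆ I.conceptI d := by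
    simpa [Subsumes] using hnsub
  obtain ⟨x, hxc, hxd⟩ := Set.not_subset.1 hnot
  set J := I.updateRole u Set.univ
  have e := isRoleClosedEmbedding_updateRole I u Set.univ hfresh
  have hJCT : ∀ y, y ∈ J.conceptI (CT a T) := fun y =>
    (e.mem_conceptI_iff ((rolesOf_CT_subset a T).trans hT) y).2
      ((modelsT_iff_forall_mem_CT I a T).1 hIT y)
  have hJH : J.modelsH (addU H roles u) := by
    rintro p (hp | ⟨S, -, rfl | rfl⟩)
    · rw [roleI_updateRole_of_base_ne I u _ (hfresh _ (hH ⟨p, hp, Or.inl rfl⟩)),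
        roleI_updateRole_of_base_ne I u _ (hfresh _ (hH ⟨p, hp, Or.inr rfl⟩))]
      exact hIH p hp
    all_goals
      intro q _
      show q ∈ J.rI u
      rw [rI_updateRole_self]
      trivial
  refine ⟨J, respectsTrans_updateRole I u _ htrans fun _ _ _ _ _ => trivial, hJH, x,
    (e.mem_conceptI_iff hc x).2 hxc, fun hxd' => hxd ((e.mem_conceptI_iff hd x).1 hxd'),
    hJCT x, fun y _ => hJCT y⟩

end Internalisation

theorem internalisation_subsumption_general {Cn Rn : Type} (a : Cn) (Rp : Set Rn)
    (T : Terminology Cn Rn) (H : RoleHierarchy Rn) (c d : Concept Cn Rn) (u : Rn)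
    (roles : Set (SRole Rn))
    (hroles : roles = c.rolesOf ∪ d.rolesOf ∪ Terminology.rolesOf T ∪
      RoleHierarchy.rolesOf H)
    (hfresh : ∀ S ∈ roles, S.base ≠ u) :
    (∀ I : Interp Cn Rn, I.respectsTrans Rp → I.modelsT T → I.modelsH H →
        I.conceptI c ⊆ I.conceptI d) ↔
    ¬ (∃ I : Interp Cn Rn, I.respectsTrans (insert u Rp) ∧ I.modelsH (addU H roles u) ∧
        (I.conceptI (.conj c (.conj (.neg d) (.conj (CT a T)
          (.all (SRole.name u) (CT a T)))))).Nonempty) := by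
  have hsub := hroles.ge
  simp only [Set.union_subset_iff] at hsub
  obtain ⟨⟨⟨hc, hd⟩, hT⟩, hH⟩ := hsub
  exact ⟨Subsumes.not_satisfiable_internalisation hc hd hT,
    not_imp_comm.1 (satisfiable_internalisation_of_not_subsumes hc hd hT hH hfresh)⟩

/-- subsumption internalisation. `d` subsumes `c` w.r.t. terminology `T`
and role hierarchy `H` iff `c ⊓ ¬d ⊓ C_T ⊓ ∀U.C_T` is unsatisfiable w.r.t. `R_U`. -/
theorem internalisation_subsumption {Cn Rn : Type} (a : Cn) (Rp : Set Rn)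
    (T : Terminology Cn Rn) (H : RoleHierarchy Rn) (c d : Concept Cn Rn) (u : Rn)
    (roles : Set (SRole Rn))
    (hroles : roles = c.rolesOf ∪ d.rolesOf ∪ Terminology.rolesOf T ∪
      RoleHierarchy.rolesOf H)
    (hfresh : ∀ S ∈ roles, S.base ≠ u) (hfreshRp : u ∉ Rp) :
    (∀ I : Interp Cn Rn, I.respectsTrans Rp → I.modelsT T → I.modelsH H →
        I.conceptI c ⊆ I.conceptI d) ↔
    ¬ (∃ I : Interp Cn Rn, I.respectsTrans (insert u Rp) ∧ I.modelsH (addU H roles u) ∧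
        (I.conceptI (.conj c (.conj (.neg d) (.conj (CT a T)
          (.all (SRole.name u) (CT a T)))))).Nonempty) :=
  internalisation_subsumption_general a Rp T H c d u roles hroles hfresh

end SHIQ
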